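/- arXiv:2312.13701 — 2 statements merged into one kernel-verified Lean document; each statement's English description precedes it below -/
import Mathlib

section
/- Let C be a binary projective three-weight linear code of length n, dimension k and minimum distance d, and suppose A_n(C) > 0. Then the three nonzero Hamming weights of C are w1 = d, w2 = n − d and w3 = n, and d satisfies the relation (2^{k−1} − 1)·4·d·(n − d) = 2^{k−1}·n·(n − 1) (equivalently, d = (n − √(n·(2^{k−1} − n)/(2^{k−1} − 1)))/2 and n − d = (n + √(n·(2^{k−1} − n)/(2^{k−1} − 1)))/2). -/
/-- Hamming weight of a binary vector: the number of nonzero coordinates. -/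
noncomputable def wt {ι : Type*} (c : ι → ZMod 2) : ℕ := Nat.card {i : ι // c i ≠ 0}

/-- Number of codewords of Hamming weight `w` in a set of binary vectors. -/
noncomputable def weightCount {ι : Type*} (C : Set (ι → ZMod 2)) (w : ℕ) : ℕ :=
  Nat.card {c : ι → ZMod 2 // c ∈ C ∧ wt c = w}

/-- The dual code: all vectors orthogonal (standard inner product) to every codeword. -/
def dualCode {ι : Type*} (C : Set (ι → ZMod 2)) : Set (ι → ZMod 2) :=
  {x | ∀ c ∈ C, ∑ᶠ i, x i * c i = 0}

/-- A code is projective if the minimum distance of its dual is at least 3. -/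
def IsProjective {ι : Type*} (C : Set (ι → ZMod 2)) : Prop :=
  ∀ x ∈ dualCode C, x ≠ 0 → 3 ≤ wt x

/-- `d` is the minimum distance of `C`: the least Hamming weight of a nonzero codeword. -/
def IsMinDist {ι : Type*} (C : Set (ι → ZMod 2)) (d : ℕ) : Prop :=
  (∃ c ∈ C, c ≠ 0 ∧ wt c = d) ∧ ∀ c ∈ C, c ≠ 0 → d ≤ wt c

/-- The number of nonzero Hamming weights occurring among codewords of `C`. -/
noncomputable def numNonzeroWeights {ι : Type*} (C : Set (ι → ZMod 2)) : ℕ :=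
  Nat.card {i : ℕ | 1 ≤ i ∧ weightCount C i ≠ 0}

/-- The codewords of weight `w` in `C` hold a 2-design with index `lam`: every pair of
distinct coordinate positions lies in the support of exactly `lam` codewords of weight `w`. -/
def HoldsTwoDesign {ι : Type*} (C : Set (ι → ZMod 2)) (w lam : ℕ) : Prop :=
  ∀ p q : ι, p ≠ q →
    Nat.card {c : ι → ZMod 2 // c ∈ C ∧ wt c = w ∧ c p ≠ 0 ∧ c q ≠ 0} = lam

/-!
Since `C` contains the all-ones word, complementation `c ↦ c + 1` is a bijection of `C` sending
weight `w` to `n - w`. Hence every weight other than `n` lies in `[d, n - d]`, and three weights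
force the weights `d < n - d < n`, the first two occurring equally often, `a = 2^(k-1) - 1` times.
Projectivity (dual distance `≥ 3`) makes `C` an orthogonal array of strength 2: every pair of
coordinates takes each value of `(ZMod 2)²` on exactly `2^(k-2)` codewords. Counting pairs gives
`4 ∑ wt(c)² = n (n + 1) 2^k`, and comparing with `4 (a (d² + (n - d)²) + n²)` yields the relation.
-/

open Finset

lemma add_one_add_one {ι : Type*} (c : ι → ZMod 2) : c + 1 + 1 = c := by
  have h : ∀ x : ZMod 2, x + 1 + 1 = x := by decide
  funext i
  exact h (c i)

section Weight

variable {ι : Type*} [Fintype ι]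

lemma wt_eq_card_filter (c : ι → ZMod 2) : wt c = #{i | c i ≠ 0} := by
  rw [wt, Nat.card_eq_fintype_card, Fintype.card_subtype]

lemma wt_le_card (c : ι → ZMod 2) : wt c ≤ Fintype.card ι :=
  Nat.card_eq_fintype_card (α := ι) ▸ Finite.card_subtype_le _

lemma wt_eq_zero_iff {c : ι → ZMod 2} : wt c = 0 ↔ c = 0 := by
  simp [wt_eq_card_filter, card_eq_zero, filter_eq_empty_iff, funext_iff]

lemma wt_add_one (c : ι → ZMod 2) : wt (c + 1) = Fintype.card ι - wt c := by
  have hsplit := card_filter_add_card_filter_not (s := univ) (fun i => c i ≠ 0)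
  have hflip : ∀ x : ZMod 2, x + 1 ≠ 0 ↔ ¬x ≠ 0 := by decide
  simp only [wt_eq_card_filter, Pi.add_apply, Pi.one_apply, hflip, card_univ] at hsplit ⊢
  omega

lemma wt_eq_card_iff {c : ι → ZMod 2} : wt c = Fintype.card ι ↔ c = 1 :=
  calc wt c = Fintype.card ι ↔ wt (c + 1) = 0 := by rw [wt_add_one]; have := wt_le_card c; omega
    _ ↔ c + 1 = 0 := wt_eq_zero_iff
    _ ↔ c = 1 := by
      constructor
      · intro h; rw [← add_one_add_one c, h, zero_add]
      · rintro rfl; simpa using add_one_add_one (0 : ι → ZMod 2)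

end Weight

section WeightCount

variable {ι : Type*} [Fintype ι] {C : Submodule (ZMod 2) (ι → ZMod 2)}

lemma weightCount_ne_zero_iff {w : ℕ} :
    weightCount (C : Set (ι → ZMod 2)) w ≠ 0 ↔ ∃ c ∈ C, wt c = w := by
  simp only [weightCount, Nat.card_ne_zero, nonempty_subtype, SetLike.mem_coe,
    and_iff_left (Subtype.finite)]

lemma weightCount_zero : weightCount (C : Set (ι → ZMod 2)) 0 = 1 :=
  Nat.card_eq_one_iff_exists.2
    ⟨⟨0, C.zero_mem, wt_eq_zero_iff.2 rfl⟩, fun c => Subtype.ext (wt_eq_zero_iff.1 c.2.2)⟩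

lemma weightCount_card (h1 : (1 : ι → ZMod 2) ∈ C) :
    weightCount (C : Set (ι → ZMod 2)) (Fintype.card ι) = 1 :=
  Nat.card_eq_one_iff_exists.2
    ⟨⟨1, h1, wt_eq_card_iff.2 rfl⟩, fun c => Subtype.ext (wt_eq_card_iff.1 c.2.2)⟩

lemma weightCount_card_sub (h1 : (1 : ι → ZMod 2) ∈ C) {w : ℕ} (hw : w ≤ Fintype.card ι) :
    weightCount (C : Set (ι → ZMod 2)) (Fintype.card ι - w) =
      weightCount (C : Set (ι → ZMod 2)) w :=
  Nat.card_congr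
    { toFun c := ⟨c.1 + 1, C.add_mem c.2.1 h1, by rw [wt_add_one, c.2.2]; omega⟩
      invFun c := ⟨c.1 + 1, C.add_mem c.2.1 h1, by rw [wt_add_one, c.2.2]⟩
      left_inv c := Subtype.ext (add_one_add_one c.1)
      right_inv c := Subtype.ext (add_one_add_one c.1) }

end WeightCount

section NonzeroWeights

variable {ι : Type*} [Fintype ι]

def nonzeroWeights (C : Set (ι → ZMod 2)) : Set ℕ :=
  {i | 1 ≤ i ∧ weightCount C i ≠ 0}

variable {C : Submodule (ZMod 2) (ι → ZMod 2)} {d w : ℕ}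

lemma mem_nonzeroWeights :
    w ∈ nonzeroWeights (C : Set (ι → ZMod 2)) ↔ ∃ c ∈ C, c ≠ 0 ∧ wt c = w := by
  rw [nonzeroWeights, Set.mem_ofPred_eq, weightCount_ne_zero_iff]
  constructor
  · rintro ⟨hw, c, hc, rfl⟩
    exact ⟨c, hc, fun h => by simp [wt_eq_zero_iff.2 h] at hw, rfl⟩
  · rintro ⟨c, hc, hc0, rfl⟩
    exact ⟨Nat.one_le_iff_ne_zero.2 (mt wt_eq_zero_iff.1 hc0), c, hc, rfl⟩

lemma le_of_mem_nonzeroWeights (hd : IsMinDist (C : Set (ι → ZMod 2)) d)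
    (hw : w ∈ nonzeroWeights (C : Set (ι → ZMod 2))) : d ≤ w := by
  obtain ⟨c, hc, hc0, rfl⟩ := mem_nonzeroWeights.1 hw
  exact hd.2 c hc hc0

lemma le_card_of_mem_nonzeroWeights (hw : w ∈ nonzeroWeights (C : Set (ι → ZMod 2))) :
    w ≤ Fintype.card ι := by
  obtain ⟨c, -, -, rfl⟩ := mem_nonzeroWeights.1 hw
  exact wt_le_card c

lemma card_sub_mem_nonzeroWeights (h1 : (1 : ι → ZMod 2) ∈ C)
    (hw : w ∈ nonzeroWeights (C : Set (ι → ZMod 2))) (hwn : w ≠ Fintype.card ι) :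
    Fintype.card ι - w ∈ nonzeroWeights (C : Set (ι → ZMod 2)) := by
  have hle := le_card_of_mem_nonzeroWeights hw
  exact ⟨by omega, weightCount_card_sub h1 hle ▸ hw.2⟩

lemma nonzeroWeights_eq_of_numNonzeroWeights_eq_three (h1 : (1 : ι → ZMod 2) ∈ C)
    (hd : IsMinDist (C : Set (ι → ZMod 2)) d) (h3 : numNonzeroWeights (C : Set (ι → ZMod 2)) = 3) :
    nonzeroWeights (C : Set (ι → ZMod 2)) = {d, Fintype.card ι - d, Fintype.card ι} ∧
      d < Fintype.card ι - d := by
  set n := Fintype.card ι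
  set S := nonzeroWeights (C : Set (ι → ZMod 2))
  have hS : S.ncard = 3 := h3 ▸ (Nat.card_coe_set_eq S).symm
  have hdS : d ∈ S := by
    obtain ⟨c, hc, hc0, hcd⟩ := hd.1
    exact mem_nonzeroWeights.2 ⟨c, hc, hc0, hcd⟩
  have hd1 := hdS.1
  have hdn := le_card_of_mem_nonzeroWeights hdS
  have hnS : n ∈ S := ⟨by omega, by rw [weightCount_card h1]; exact one_ne_zero⟩
  have hsub : ∀ w ∈ S, w ≠ n → d ≤ w ∧ w ≤ n - d := fun w hw hwn =>
    ⟨le_of_mem_nonzeroWeights hd hw,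
      have := le_of_mem_nonzeroWeights hd (card_sub_mem_nonzeroWeights h1 hw hwn)
      have := le_card_of_mem_nonzeroWeights hw
      by omega⟩
  have hlt : d < n - d := by
    by_contra! hle
    have : S ⊆ {d, n} := fun w hw => by
      by_cases hwn : w = n
      · exact Or.inr hwn
      · exact Or.inl (by have := hsub w hw hwn; omega)
    have := (Set.ncard_le_ncard this (Set.toFinite _)).trans (Set.ncard_insert_le d {n})
    rw [Set.ncard_singleton] at this
    omega
  refine ⟨(Set.eq_of_subset_of_ncard_le ?_ ?_ (Set.finite_of_ncard_ne_zero (by omega))).symm, hlt⟩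
  · rintro w (rfl | rfl | rfl)
    · exact hdS
    · exact card_sub_mem_nonzeroWeights h1 hdS (by omega)
    · exact hnS
  · rw [hS, Set.ncard_insert_of_notMem (by simp; omega), Set.ncard_pair (by omega)]

end NonzeroWeights

theorem card_mul_card_fiber_of_surjective {G M F : Type*} [AddGroup G] [Fintype G] [AddMonoid M]
    [Fintype M] [DecidableEq M] [FunLike F G M] [AddMonoidHomClass F G M] (f : F)
    (hf : Function.Surjective f) (y : M) :
    Fintype.card M * #{g | f g = y} = Fintype.card G := by
  rw [← card_univ (α := G),
    card_eq_sum_card_fiberwise (s := univ) (f := f) (t := univ) fun _ _ => mem_univ _,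
    sum_congr rfl fun x _ => AddMonoidHom.card_fiber_eq_of_mem_range f (hf x) (hf y),
    sum_const, card_univ, smul_eq_mul]

section OrthogonalArray

variable {ι : Type*} [Fintype ι] {C : Submodule (ZMod 2) (ι → ZMod 2)}

theorem restrict_surjective_of_card_lt_wt_dual (s : Finset ι)
    (hs : ∀ x ∈ dualCode (C : Set (ι → ZMod 2)), x ≠ 0 → #s < wt x) :
    Function.Surjective (LinearMap.funLeft (ZMod 2) (ZMod 2) ((↑) : s → ι) ∘ₗ C.subtype) := by
  classical
  rw [← LinearMap.range_eq_top]
  by_contra hne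
  obtain ⟨f, hf0, hfR⟩ := (LinearMap.range _).exists_le_ker_of_lt_top (lt_top_iff_ne_top.2 hne)
  set g := f ∘ₗ LinearMap.funLeft (ZMod 2) (ZMod 2) ((↑) : s → ι)
  -- `x` represents the functional `g` under the standard inner product
  set x : ι → ZMod 2 := fun i => g fun j => if i = j then 1 else 0
  have hgx : ∀ c, g c = ∑ i, x i * c i := fun c => by
    rw [g.pi_apply_eq_sum_univ]
    simp only [smul_eq_mul, mul_comm, x]
  have hx_dual : x ∈ dualCode (C : Set (ι → ZMod 2)) := fun c hc => by
    rw [finsum_eq_sum_of_fintype, ← hgx]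
    exact hfR ⟨⟨c, hc⟩, rfl⟩
  have hx0 : x ≠ 0 := by
    obtain ⟨y, hy⟩ : ∃ y, f y ≠ 0 := by
      by_contra! h
      exact hf0 (LinearMap.ext h)
    have hext : g (fun i => if h : i ∈ s then y ⟨i, h⟩ else 0) = f y :=
      congrArg f (funext fun j => dif_pos j.2)
    intro hx
    exact hy (by simpa [hgx, hx] using hext.symm)
  have hwt : wt x ≤ #s := by
    rw [wt_eq_card_filter]
    refine card_le_card fun i hi => ?_
    by_contra his
    have : (LinearMap.funLeft (ZMod 2) (ZMod 2) ((↑) : s → ι)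
        fun j => if i = j then 1 else 0) = 0 := by
      funext j
      simp [LinearMap.funLeft, ne_of_mem_of_not_mem j.2 his |>.symm]
    simp [x, g, this] at hi
  exact absurd (hs x hx_dual hx0) (not_lt.2 hwt)

end OrthogonalArray

section Moments

variable {ι : Type*} [Fintype ι] {C : Submodule (ZMod 2) (ι → ZMod 2)} [Fintype C]

theorem two_pow_card_mul_card_filter_forall_ne_zero (s : Finset ι)
    (hs : ∀ x ∈ dualCode (C : Set (ι → ZMod 2)), x ≠ 0 → #s < wt x) :
    2 ^ #s * #{c : C | ∀ i ∈ s, (c : ι → ZMod 2) i ≠ 0} = Fintype.card C := by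
  classical
  have hfiber := card_mul_card_fiber_of_surjective _ (restrict_surjective_of_card_lt_wt_dual s hs) 1
  rw [Fintype.card_fun, ZMod.card, Fintype.card_coe] at hfiber
  have hne : ∀ x : ZMod 2, x ≠ 0 ↔ x = 1 := by decide
  convert hfiber using 3
  simp [funext_iff, hne]

theorem four_mul_sum_wt_sq (hproj : IsProjective (C : Set (ι → ZMod 2))) :
    4 * ∑ c : C, wt (c : ι → ZMod 2) ^ 2 =
      Fintype.card ι * (Fintype.card ι + 1) * Fintype.card C := by
  classical
  have hpair : ∀ i j : ι, 4 * #{c : C | (c : ι → ZMod 2) i ≠ 0 ∧ (c : ι → ZMod 2) j ≠ 0} =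
      (1 + if i = j then 1 else 0) * Fintype.card C := by
    intro i j
    have := two_pow_card_mul_card_filter_forall_ne_zero (C := C) {i, j}
      fun x hx hx0 => (card_le_two.trans_lt (by norm_num)).trans_le (hproj x hx hx0)
    by_cases hij : i = j
    · subst hij
      simp only [insert_eq_self.2 (mem_singleton_self i), card_singleton, mem_singleton,
        forall_eq] at this
      rw [if_pos rfl, ← this]
      simp only [and_self]
      ring
    · simp only [card_pair hij, mem_insert, mem_singleton, forall_eq_or_imp, forall_eq] at this
      rw [if_neg hij, ← this]
      ring
  have hsq : ∀ c : ι → ZMod 2,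
      wt c ^ 2 = ∑ i, ∑ j, if c i ≠ 0 ∧ c j ≠ 0 then 1 else 0 := fun c => by
    simp only [wt_eq_card_filter, card_filter, sq, sum_mul_sum, ite_zero_mul_ite_zero, one_mul]
  calc 4 * ∑ c : C, wt (c : ι → ZMod 2) ^ 2
      = ∑ i, ∑ j, 4 * #{c : C | (c : ι → ZMod 2) i ≠ 0 ∧ (c : ι → ZMod 2) j ≠ 0} := by
        simp only [hsq, card_filter, mul_sum]
        rw [sum_comm]
        refine sum_congr rfl fun i _ => ?_
        rw [sum_comm]
    _ = Fintype.card ι * (Fintype.card ι + 1) * Fintype.card C := by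
        simp only [hpair, ← sum_mul, sum_add_distrib, sum_ite_eq, mem_univ, if_true, sum_const,
          card_univ, smul_eq_mul, mul_one]
        ring

end Moments

section Enumerator

variable {ι : Type*} {C : Submodule (ZMod 2) (ι → ZMod 2)} [Fintype C]

lemma weightCount_eq_card_filter (w : ℕ) :
    weightCount (C : Set (ι → ZMod 2)) w = #{c : C | wt (c : ι → ZMod 2) = w} := by
  rw [weightCount, ← Fintype.card_subtype, ← Nat.card_eq_fintype_card]
  exact Nat.card_congr (Equiv.subtypeSubtypeEquivSubtypeInter (· ∈ C) (wt · = w)).symm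

lemma sum_wt_eq_sum_weightCount {T : Finset ℕ} (hT : ∀ c ∈ C, wt c ∈ T) (F : ℕ → ℕ) :
    ∑ c : C, F (wt (c : ι → ZMod 2)) = ∑ w ∈ T, weightCount (C : Set (ι → ZMod 2)) w * F w := by
  rw [← sum_fiberwise_of_maps_to (t := T) (g := fun c : C => wt (c : ι → ZMod 2))
    fun c _ => hT c c.2]
  refine sum_congr rfl fun w _ => ?_
  rw [sum_congr rfl fun c hc => by rw [(mem_filter.1 hc).2], sum_const, smul_eq_mul,
    weightCount_eq_card_filter]

variable [Fintype ι]

lemma sum_wt_eq_of_nonzeroWeights_eq {d : ℕ} (h1 : (1 : ι → ZMod 2) ∈ C)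
    (hS : nonzeroWeights (C : Set (ι → ZMod 2)) = {d, Fintype.card ι - d, Fintype.card ι})
    (hlt : d < Fintype.card ι - d) (F : ℕ → ℕ) :
    ∑ c : C, F (wt (c : ι → ZMod 2)) =
      F 0 + weightCount (C : Set (ι → ZMod 2)) d * (F d + F (Fintype.card ι - d)) +
        F (Fintype.card ι) := by
  set n := Fintype.card ι
  have hd1 : 1 ≤ d := (hS ▸ Set.mem_insert d _ : d ∈ nonzeroWeights (C : Set (ι → ZMod 2))).1
  have hT : ∀ c ∈ C, wt c ∈ ({0, d, n - d, n} : Finset ℕ) := fun c hc => by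
    by_cases hc0 : c = 0
    · simp [wt_eq_zero_iff.2 hc0]
    · have : wt c ∈ nonzeroWeights (C : Set (ι → ZMod 2)) := mem_nonzeroWeights.2 ⟨c, hc, hc0, rfl⟩
      rw [hS] at this
      simpa using Or.inr this
  rw [sum_wt_eq_sum_weightCount hT, sum_insert (by simp; omega), sum_insert (by simp; omega),
    sum_pair (by omega), weightCount_zero, weightCount_card h1, weightCount_card_sub h1 (by omega)]
  ring

end Enumerator

theorem three_weights_of_projective_with_full_weight (n k d : ℕ) (C : Submodule (ZMod 2) (Fin n → ZMod 2))
    (hk : Module.finrank (ZMod 2) C = k)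
    (hd : IsMinDist (C : Set (Fin n → ZMod 2)) d)
    (hproj : IsProjective (C : Set (Fin n → ZMod 2)))
    (h3 : numNonzeroWeights (C : Set (Fin n → ZMod 2)) = 3)
    (hAn : 0 < weightCount (C : Set (Fin n → ZMod 2)) n) :
    {i : ℕ | 1 ≤ i ∧ weightCount (C : Set (Fin n → ZMod 2)) i ≠ 0} = {d, n - d, n} ∧
      (2 ^ (k - 1) - 1) * 4 * d * (n - d) = 2 ^ (k - 1) * n * (n - 1) := by
  classical
  obtain ⟨c, hc, hcn⟩ := weightCount_ne_zero_iff.1 hAn.ne'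
  have h1 : (1 : Fin n → ZMod 2) ∈ C := wt_eq_card_iff.1 (hcn.trans (Fintype.card_fin n).symm) ▸ hc
  obtain ⟨hS, hlt⟩ := nonzeroWeights_eq_of_numNonzeroWeights_eq_three h1 hd h3
  have hsum := sum_wt_eq_of_nonzeroWeights_eq h1 hS hlt
  rw [Fintype.card_fin] at hS hlt hsum
  refine ⟨hS, ?_⟩
  set a := weightCount (C : Set (Fin n → ZMod 2)) d
  have hcardC : Fintype.card C = 2 ^ k := by
    rw [Module.card_eq_pow_finrank (K := ZMod 2), ZMod.card, hk]
  have hcard : 2 ^ k = 2 * a + 2 := by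
    rw [← hcardC, ← card_univ, card_eq_sum_ones, hsum fun _ => 1]
    ring
  have hmoment := four_mul_sum_wt_sq hproj
  rw [hsum (· ^ 2), Fintype.card_fin, hcardC, hcard] at hmoment
  have hk1 : 2 ^ (k - 1) = a + 1 := by
    cases k with
    | zero => omega
    | succ k =>
      rw [pow_succ] at hcard
      rw [Nat.add_sub_cancel]
      omega
  rw [hk1, Nat.add_sub_cancel]
  zify [show d ≤ n by omega, show 1 ≤ n by omega] at hmoment ⊢
  linarith
end

section
/- Let m ≥ 5 be odd, let u be a positive integer with gcd(u, m) = 1, and let ρ ∈ F_2. For b ∈ F_q^*, let c_b = (Tr(b·d_1),...,Tr(b·d_n)) be the codeword of C_{D_ρ} associated to b. Then: (1) if b = 1, the Hamming weight of c_b equals |D_ρ|; (2) if b ∈ F_q \ F_2, the Hamming weight of c_b lies in { |D_ρ|/2 − 2^{(m−5)/2}, |D_ρ|/2 + 2^{(m−5)/2} }. -/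
/-- The defining set `D_ρ = {x ∈ F_{2^m} : Tr(x) = 1, Tr(x^{2^u+1}) = ρ}`. -/
def Dset (m u : ℕ) (ρ : ZMod 2) : Set (GaloisField 2 m) :=
  {x | Algebra.trace (ZMod 2) (GaloisField 2 m) x = 1 ∧
       Algebra.trace (ZMod 2) (GaloisField 2 m) (x ^ (2 ^ u + 1)) = ρ}

/-- The linear map `b ↦ (Tr(b·d))_{d ∈ D_ρ}`. -/
noncomputable def codeMap (m u : ℕ) (ρ : ZMod 2) :
    GaloisField 2 m →ₗ[ZMod 2] (↥(Dset m u ρ) → ZMod 2) :=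
  LinearMap.pi fun d =>
    (Algebra.trace (ZMod 2) (GaloisField 2 m)).comp
      (LinearMap.mulRight (ZMod 2) (d : GaloisField 2 m))

/-- The code `C_{D_ρ} = {(Tr(b·d))_{d ∈ D_ρ} : b ∈ F_{2^m}}`. -/
noncomputable def codeD (m u : ℕ) (ρ : ZMod 2) :
    Submodule (ZMod 2) (↥(Dset m u ρ) → ZMod 2) :=
  LinearMap.range (codeMap m u ρ)

/-!
Write `S(c) = ∑ₓ (-1)^Tr(x^(2^u+1) + c x)`. Since `Tr(x^(2^u) w) = Tr(x w^(2^-u))`, substituting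
`y = x + w` in `S(c)^2` leaves a character sum in `x` of the linear form `x ↦ Tr(x L(w))` with
`L(w) = w^(2^u) + w^(2^-u)`, so only `w ∈ ker L` survive; as `gcd(2u, m) = 1`, `ker L = 𝔽₂` and
`S(c)^2 = 2^m (1 + (-1)^Tr(1 + c))`. Expanding the indicator of `D_ρ` in characters gives
`4 (|D_ρ| - 2 wt(c_b)) = ±(S(b) - S(1 + b))`. Because `Tr b + Tr (1 + b) = 1`, exactly one of
`S(b)`, `S(1 + b)` vanishes and the other squares to `2^(m+1)`, so
`wt(c_b) = |D_ρ|/2 ± 2^((m-5)/2)`.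
-/

open Finset

def sgn (t : ZMod 2) : ℤ := if t = 0 then 1 else -1

@[simp] lemma sgn_zero : sgn 0 = 1 := rfl

@[simp] lemma sgn_one : sgn 1 = -1 := rfl

lemma sgn_sq (t : ZMod 2) : sgn t ^ 2 = 1 := by
  revert t; decide

lemma sgn_add (s t : ZMod 2) : sgn (s + t) = sgn s * sgn t := by
  revert s t; decide

lemma sum_sgn_eq_card_sub {α : Type*} (s : Finset α) (f : α → ZMod 2) :
    ∑ x ∈ s, sgn (f x) = #s - 2 * #{x ∈ s | f x ≠ 0} := by
  rw [card_filter, Nat.cast_sum, mul_sum, card_eq_sum_ones, Nat.cast_sum, ← sum_sub_distrib]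
  refine sum_congr rfl fun x _ => ?_
  generalize f x = t
  revert t; decide

theorem FiniteField.pow_eq_self_of_pow_pow_eq_self {K : Type*} [Field K] [Fintype K] {p n k : ℕ}
    (hK : Fintype.card K = p ^ n) (hkn : k.Coprime n) {w : K} (hw : w ^ p ^ k = w) :
    w ^ p = w := by
  have hk : Function.IsPeriodicPt (· ^ p) k w := by
    simpa [Function.IsPeriodicPt, Function.IsFixedPt, pow_iterate] using hw
  have hn : Function.IsPeriodicPt (· ^ p) n w := by
    simpa [Function.IsPeriodicPt, Function.IsFixedPt, pow_iterate, ← hK] using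
      FiniteField.pow_card w
  have h1 := hk.gcd hn
  rw [hkn.gcd_eq_one] at h1
  simpa [Function.IsPeriodicPt, Function.IsFixedPt] using h1

lemma wt_comp_subtype_val {α : Type*} [Fintype α] (p : α → Prop) [DecidablePred p]
    (f : α → ZMod 2) : wt (fun d : {x // p x} => f d) = #{x | p x ∧ f x ≠ 0} := by
  rw [wt, Nat.card_congr (Equiv.subtypeSubtypeEquivSubtypeInter p (f · ≠ 0)),
    Nat.card_eq_fintype_card, Fintype.card_subtype]

section CharTwo

variable {K : Type*} [Field K] [Fintype K] [Algebra (ZMod 2) K]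

local notation "Tr" => Algebra.trace (ZMod 2) K
local notation "n" => Module.finrank (ZMod 2) K

lemma card_eq_two_pow_finrank : Fintype.card K = 2 ^ n := by
  rw [Module.card_eq_pow_finrank (K := ZMod 2), ZMod.card]

lemma trace_pow_two_pow (x : K) (k : ℕ) : Tr (x ^ 2 ^ k) = Tr x := by
  have h := FiniteField.coe_frobeniusAlgEquivOfAlgebraic_iterate (ZMod 2) K k
  rw [ZMod.card, ← AlgEquiv.coe_pow] at h
  rw [← congrFun h x, Algebra.trace_eq_of_algEquiv]

lemma trace_one_of_odd (h : Odd n) : Tr 1 = 1 := by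
  rw [← map_one (algebraMap (ZMod 2) K), Algebra.trace_algebraMap, nsmul_one,
    ZMod.natCast_eq_one_iff_odd.mpr h]

lemma sum_sgn_trace_mul {c : K} (hc : c ≠ 0) : ∑ x, sgn (Tr (c * x)) = 0 := by
  obtain ⟨z, hz⟩ := Algebra.trace_surjective (ZMod 2) K 1
  have hshift : ∀ x, sgn (Tr (c * (x + c⁻¹ * z))) = - sgn (Tr (c * x)) := fun x => by
    rw [mul_add, mul_inv_cancel_left₀ hc, map_add, hz, sgn_add, sgn_one, mul_neg_one]
  have := Equiv.sum_comp (Equiv.addRight (c⁻¹ * z)) (fun x => sgn (Tr (c * x)))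
  simp only [Equiv.coe_addRight, hshift, sum_neg_distrib] at this
  linarith

lemma pow_two_pow_pred_finrank_mul_pow (u : ℕ) (w : K) :
    (w ^ 2 ^ ((n - 1) * u)) ^ 2 ^ u = w := by
  rw [← pow_mul, ← pow_add, ← add_one_mul, Nat.sub_one_add_one Module.finrank_pos.ne', pow_mul,
    ← card_eq_two_pow_finrank, FiniteField.pow_card_pow]

lemma trace_pow_two_pow_mul (u : ℕ) (x w : K) :
    Tr (x ^ 2 ^ u * w) = Tr (x * w ^ 2 ^ ((n - 1) * u)) := by
  rw [← trace_pow_two_pow (x * _) u, mul_pow, pow_two_pow_pred_finrank_mul_pow]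

lemma trace_gold_add (u : ℕ) (c x w : K) :
    Tr ((x + w) ^ (2 ^ u + 1) + c * (x + w)) = Tr (x ^ (2 ^ u + 1) + c * x) +
      Tr (w ^ (2 ^ u + 1) + c * w) + Tr (x * (w ^ 2 ^ u + w ^ 2 ^ ((n - 1) * u))) := by
  have : CharP K 2 := charP_of_injective_algebraMap' (ZMod 2) 2
  have hexp : (x + w) ^ (2 ^ u + 1) + c * (x + w) = (x ^ (2 ^ u + 1) + c * x) +
      (w ^ (2 ^ u + 1) + c * w) + (x ^ 2 ^ u * w + x * w ^ 2 ^ u) := by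
    rw [pow_succ, add_pow_char_pow, pow_succ, pow_succ]; ring
  rw [hexp, mul_add]
  simp only [map_add, trace_pow_two_pow_mul]
  ring

lemma pow_two_pow_add_pow_two_pow_eq_zero_iff {u : ℕ} (hu : (2 * u).Coprime n) {w : K} :
    w ^ 2 ^ u + w ^ 2 ^ ((n - 1) * u) = 0 ↔ w = 0 ∨ w = 1 := by
  have : CharP K 2 := charP_of_injective_algebraMap' (ZMod 2) 2
  constructor
  · intro h
    have h2u : w ^ 2 ^ (2 * u) = w := by
      rw [two_mul, pow_add, pow_mul, CharTwo.add_eq_zero.mp h, pow_two_pow_pred_finrank_mul_pow]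
    have hw := FiniteField.pow_eq_self_of_pow_pow_eq_self card_eq_two_pow_finrank hu h2u
    rwa [sq, ← IsIdempotentElem, IsIdempotentElem.iff_eq_zero_or_one] at hw
  · rintro (rfl | rfl)
    · simp
    · simp [CharTwo.add_self_eq_zero]

noncomputable def goldWalsh (u : ℕ) (c : K) : ℤ := ∑ x, sgn (Tr (x ^ (2 ^ u + 1) + c * x))

lemma goldWalsh_sq {u : ℕ} (hu : (2 * u).Coprime n) (c : K) :
    goldWalsh u c ^ 2 = Fintype.card K * (1 + sgn (Tr (1 + c))) := by
  classical
  set f : K → ℤ := fun x => sgn (Tr (x ^ (2 ^ u + 1) + c * x)) with hf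
  have hker : ∀ w, ∑ x, sgn (Tr (x * (w ^ 2 ^ u + w ^ 2 ^ ((n - 1) * u)))) =
      if w ∈ ({0, 1} : Finset K) then (Fintype.card K : ℤ) else 0 := fun w => by
    simp_rw [mul_comm _ (_ + _), mem_insert, mem_singleton,
      ← pow_two_pow_add_pow_two_pow_eq_zero_iff hu]
    split_ifs with hw
    · simp [hw]
    · exact sum_sgn_trace_mul hw
  have hpair : ∀ x w,
      f x * f (x + w) = f w * sgn (Tr (x * (w ^ 2 ^ u + w ^ 2 ^ ((n - 1) * u)))) := by
    intro x w
    simp only [hf, trace_gold_add, ← sgn_add]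
    generalize Tr (x ^ (2 ^ u + 1) + c * x) = a
    generalize Tr (w ^ (2 ^ u + 1) + c * w) = b
    generalize Tr (x * _) = d
    revert a b d; decide
  calc goldWalsh u c ^ 2 = ∑ x, ∑ w, f x * f (x + w) := by
        rw [goldWalsh, sq, sum_mul_sum]
        exact sum_congr rfl fun x _ => (Equiv.sum_comp (Equiv.addLeft x) _).symm
    _ = ∑ w, f w * ∑ x, sgn (Tr (x * (w ^ 2 ^ u + w ^ 2 ^ ((n - 1) * u)))) := by
        simp_rw [hpair, mul_sum]; exact sum_comm
    _ = ∑ w ∈ {0, 1}, f w * Fintype.card K := by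
        simp_rw [hker, mul_ite, mul_zero]; rw [sum_ite_mem, univ_inter]
    _ = Fintype.card K * (1 + sgn (Tr (1 + c))) := by
        rw [sum_pair zero_ne_one]; simp [hf]; ring

lemma sq_goldWalsh_sub_goldWalsh_one_add {u : ℕ} (hu : (2 * u).Coprime n) (b : K) :
    (goldWalsh u b - goldWalsh u (1 + b)) ^ 2 = 2 * Fintype.card K := by
  have htr : Tr 1 = 1 := trace_one_of_odd (Nat.Coprime.coprime_mul_right hu).odd_of_left
  have hb := goldWalsh_sq hu b
  have hb' := goldWalsh_sq hu (1 + b)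
  rw [map_add, htr] at hb
  rw [map_add, map_add, htr] at hb'
  obtain ⟨hprod, hsum⟩ : (1 + sgn (1 + Tr b)) * (1 + sgn (1 + (1 + Tr b))) = 0 ∧
      sgn (1 + Tr b) + sgn (1 + (1 + Tr b)) = 0 := by
    generalize Tr b = t; revert t; decide
  have hmul : goldWalsh u b * goldWalsh u (1 + b) = 0 := by
    refine (pow_eq_zero_iff two_ne_zero).mp ?_
    rw [mul_pow, hb, hb']
    linear_combination (Fintype.card K : ℤ) ^ 2 * hprod
  linear_combination hb + hb' - 2 * hmul + Fintype.card K * hsum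

lemma four_mul_sum_sgn_trace_mul (u : ℕ) (ρ : ZMod 2) {b : K} (hb0 : b ≠ 0) (hb1 : b ≠ 1) :
    4 * ∑ x ∈ univ.filter (fun x : K => Tr x = 1 ∧ Tr (x ^ (2 ^ u + 1)) = ρ), sgn (Tr (b * x)) =
      sgn ρ * (goldWalsh u b - goldWalsh u (1 + b)) := by
  have : CharP K 2 := charP_of_injective_algebraMap' (ZMod 2) 2
  have h1b : 1 + b ≠ 0 := fun h => hb1 (CharTwo.add_eq_zero.mp h).symm
  have hpt : ∀ x : K, 4 * (if Tr x = 1 ∧ Tr (x ^ (2 ^ u + 1)) = ρ then sgn (Tr (b * x)) else 0) =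
      sgn (Tr (b * x)) - sgn (Tr ((1 + b) * x)) + sgn ρ *
        (sgn (Tr (x ^ (2 ^ u + 1) + b * x)) - sgn (Tr (x ^ (2 ^ u + 1) + (1 + b) * x))) := by
    intro x
    -- `4 · 1[Tr x = 1 ∧ Tr x^(2^u+1) = ρ] = (1 - (-1)^(Tr x)) (1 + (-1)^(Tr x^(2^u+1) + ρ))`
    simp only [add_mul, one_mul, map_add]
    generalize Tr x = a
    generalize Tr (x ^ (2 ^ u + 1)) = q
    generalize Tr (b * x) = l
    revert a q l ρ; decide
  rw [sum_filter, mul_sum]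
  simp only [hpt, sum_add_distrib, sum_sub_distrib, ← mul_sum, sum_sgn_trace_mul hb0,
    sum_sgn_trace_mul h1b, goldWalsh]
  ring

end CharTwo

theorem weight_of_codeword_codeD_general (m u : ℕ) (hm : 5 ≤ m) (hmodd : Odd m)
    (hgcd : Nat.gcd u m = 1) (ρ : ZMod 2) (b : GaloisField 2 m) (hb : b ≠ 0) :
    (b = 1 → wt (codeMap m u ρ b) = Nat.card (Dset m u ρ)) ∧
    (b ≠ 1 →
      wt (codeMap m u ρ b) ∈
        ({Nat.card (Dset m u ρ) / 2 - 2 ^ ((m - 5) / 2),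
          Nat.card (Dset m u ρ) / 2 + 2 ^ ((m - 5) / 2)} : Set ℕ)) := by
  let := Fintype.ofFinite (GaloisField 2 m)
  set Tr := Algebra.trace (ZMod 2) (GaloisField 2 m)
  refine ⟨fun hb1 => Nat.card_congr (Equiv.subtypeUnivEquiv fun d => ?_), fun hb1 => ?_⟩
  · change Tr (b * d) ≠ 0
    rw [hb1, one_mul, d.2.1]
    exact one_ne_zero
  have hu : (2 * u).Coprime (Module.finrank (ZMod 2) (GaloisField 2 m)) := by
    rw [GaloisField.finrank 2 (by omega)]
    exact Nat.Coprime.mul_left hmodd.coprime_two_left hgcd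
  have hD : Nat.card (Dset m u ρ) = #{x | Tr x = 1 ∧ Tr (x ^ (2 ^ u + 1)) = ρ} := by
    rw [← Fintype.card_subtype, ← Nat.card_eq_fintype_card]; rfl
  have hwt : wt (codeMap m u ρ b) =
      #{x | (Tr x = 1 ∧ Tr (x ^ (2 ^ u + 1)) = ρ) ∧ Tr (b * x) ≠ 0} :=
    wt_comp_subtype_val (fun x => Tr x = 1 ∧ Tr (x ^ (2 ^ u + 1)) = ρ) (fun x => Tr (b * x))
  have key := four_mul_sum_sgn_trace_mul u ρ hb hb1
  rw [sum_sgn_eq_card_sub, filter_filter, ← hD, ← hwt] at key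
  obtain ⟨k, hk⟩ : ∃ k, m = 2 * k + 5 := by
    obtain ⟨j, rfl⟩ := hmodd; exact ⟨j - 2, by omega⟩
  have hsq : (4 * ((Nat.card (Dset m u ρ) : ℤ) - 2 * wt (codeMap m u ρ b))) ^ 2 =
      (4 * (2 * (2 ^ k : ℕ))) ^ 2 := by
    rw [key, mul_pow, sgn_sq, one_mul, sq_goldWalsh_sub_goldWalsh_one_add hu,
      card_eq_two_pow_finrank, GaloisField.finrank 2 (by omega), hk]
    push_cast; ring
  rw [show (m - 5) / 2 = k by omega, Set.mem_insert_iff, Set.mem_singleton_iff]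
  rcases sq_eq_sq_iff_eq_or_eq_neg.mp hsq with h | h <;> omega

theorem weight_of_codeword_codeD (m u : ℕ) (hm : 5 ≤ m) (hmodd : Odd m) (hu : 0 < u)
    (hgcd : Nat.gcd u m = 1) (ρ : ZMod 2) (b : GaloisField 2 m) (hb : b ≠ 0) :
    (b = 1 → wt (codeMap m u ρ b) = Nat.card (Dset m u ρ)) ∧
    (b ≠ 1 →
      wt (codeMap m u ρ b) ∈
        ({Nat.card (Dset m u ρ) / 2 - 2 ^ ((m - 5) / 2),
          Nat.card (Dset m u ρ) / 2 + 2 ^ ((m - 5) / 2)} : Set ℕ)) :=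
  weight_of_codeword_codeD_general m u hm hmodd hgcd ρ b hb
end
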